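/- Let Σ be a finite nonempty alphabet and let γ be the 2×2 array pattern γ = [x₁ x₂; x₂ x₁]. Then for all z, z' ∈ {p, r, c, rc} with z ≠ z', L_{Σ,z}(γ) ≠ L_{Σ,z'}(γ). -/

import Mathlib

/-- A nonempty rectangular two-dimensional word (array) over `σ`. -/
structure Arr (σ : Type) : Type where
  rows : ℕ
  cols : ℕ
  rows_pos : 0 < rows
  cols_pos : 0 < cols
  entry : Fin rows → Fin cols → σ

namespace Arr

variable {σ γ : Type}

/-- Column concatenation: place `V` to the right of `U`; `none` if heights differ. -/
def colCat (U V : Arr σ) : Option (Arr σ) :=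
  if h : U.rows = V.rows then
    some { rows := U.rows
           cols := U.cols + V.cols
           rows_pos := U.rows_pos
           cols_pos := by have := U.cols_pos; omega
           entry := fun i j =>
             if hj : (j : ℕ) < U.cols then U.entry i ⟨j, hj⟩
             else V.entry (Fin.cast h i) ⟨(j : ℕ) - U.cols, by have := j.isLt; omega⟩ }
  else none

/-- Row concatenation: place `V` below `U`; `none` if widths differ. -/
def rowCat (U V : Arr σ) : Option (Arr σ) :=
  if h : U.cols = V.cols then
    some { rows := U.rows + V.rows
           cols := U.cols
           rows_pos := by have := U.rows_pos; omega
           cols_pos := U.cols_pos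
           entry := fun i j =>
             if hi : (i : ℕ) < U.rows then U.entry ⟨i, hi⟩ j
             else V.entry ⟨(i : ℕ) - U.rows, by have := i.isLt; omega⟩ (Fin.cast h j) }
  else none

/-- A two-dimensional morphism: compatible with both concatenations,
with "both sides undefined" counting as equal. -/
def IsMorphism (h : Arr σ → Arr γ) : Prop :=
  (∀ V W : Arr σ, Option.map h (colCat V W) = colCat (h V) (h W)) ∧
  (∀ V W : Arr σ, Option.map h (rowCat V W) = rowCat (h V) (h W))

/-- Concatenate a nonempty list of (possibly undefined) arrays with the
given partial concatenation operation; `none` on the empty list. -/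
def catListO (op : Arr σ → Arr σ → Option (Arr σ)) : List (Option (Arr σ)) → Option (Arr σ)
  | [] => none
  | [a] => a
  | a :: b :: rest => a.bind fun x => (catListO op (b :: rest)).bind fun y => op x y

/-- `g_{⦶,⊖}`: substitute and assemble, first column-concatenating each row,
then row-concatenating the rows. -/
def subCR {X : Type} (g : X → Arr σ) (α : Arr X) : Option (Arr σ) :=
  catListO rowCat (List.ofFn fun i : Fin α.rows =>
    catListO colCat (List.ofFn fun j : Fin α.cols => some (g (α.entry i j))))

/-- `g_{⊖,⦶}`: substitute and assemble, first row-concatenating each column,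
then column-concatenating the columns. -/
def subRC {X : Type} (g : X → Arr σ) (α : Arr X) : Option (Arr σ) :=
  catListO colCat (List.ofFn fun j : Fin α.cols =>
    catListO rowCat (List.ofFn fun i : Fin α.rows => some (g (α.entry i j))))

/-- A substitution is uniform if all images have the same dimensions. -/
def Uniform {X : Type} (g : X → Arr σ) : Prop :=
  ∃ m n : ℕ, ∀ x : X, (g x).rows = m ∧ (g x).cols = n

end Arr

open Arr

/-- The five modes of array pattern languages. -/
inductive Mode | h | p | r | c | rc
deriving DecidableEq

/-- The array pattern language of an array pattern (an array over the
variables `ℕ`) in each mode. -/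
def langOf (σ : Type) : Mode → Arr ℕ → Set (Arr σ)
  | Mode.h, α => {W | ∃ g : Arr ℕ → Arr σ, IsMorphism g ∧ g α = W}
  | Mode.p, α => {W | ∃ s : ℕ → Arr σ, subCR s α = some W ∧ subRC s α = some W}
  | Mode.r, α => {W | ∃ s : ℕ → Arr σ, subCR s α = some W}
  | Mode.c, α => {W | ∃ s : ℕ → Arr σ, subRC s α = some W}
  | Mode.rc, α =>
      {W | ∃ s : ℕ → Arr σ, subCR s α = some W} ∪ {W | ∃ s : ℕ → Arr σ, subRC s α = some W}

/-- The 2×2 array pattern `[x₁ x₂; x₂ x₁]`. -/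
def gamma5 : Arr ℕ :=
  ⟨2, 2, by norm_num, by norm_num, fun i j => if (i : ℕ) = (j : ℕ) then 0 else 1⟩

/-!
Measure the images of `γ = [x₁ x₂; x₂ x₁]`: a column-row image is `h(x₁) ⦶ h(x₂)` on top of
`h(x₂) ⦶ h(x₁)`, two blocks of equal height, so it has an even number of rows; symmetrically a
row-column image has an even number of columns. Hence the constant `2 × 3` array, the image of
`x₁ ↦ 1 × 1`, `x₂ ↦ 1 × 2` in the column-row sense, is a column-row but not a row-column image,
and the constant `3 × 2` array is the reverse. Membership of these two arrays tells the four
languages `p`, `r`, `c`, `rc` apart.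
-/

namespace Arr

variable {σ : Type}

def const (a : σ) (m n : ℕ) (hm : 0 < m) (hn : 0 < n) : Arr σ :=
  ⟨m, n, hm, hn, fun _ _ => a⟩

lemma colCat_const (a : σ) (m n₁ n₂ : ℕ) (hm : 0 < m) (h₁ : 0 < n₁) (h₂ : 0 < n₂) :
    colCat (const a m n₁ hm h₁) (const a m n₂ hm h₂) =
      some (const a m (n₁ + n₂) hm (by omega)) := by
  simp only [colCat, const, ↓reduceDIte, Option.some.injEq]
  congr
  exact funext₂ fun _ _ => dite_eq_ite.trans (ite_self a)

lemma rowCat_const (a : σ) (m₁ m₂ n : ℕ) (h₁ : 0 < m₁) (h₂ : 0 < m₂) (hn : 0 < n) :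
    rowCat (const a m₁ n h₁ hn) (const a m₂ n h₂ hn) =
      some (const a (m₁ + m₂) n (by omega) hn) := by
  simp only [rowCat, const, ↓reduceDIte, Option.some.injEq]
  congr
  exact funext₂ fun _ _ => dite_eq_ite.trans (ite_self a)

lemma dims_of_colCat_eq_some {U V W : Arr σ} (h : colCat U V = some W) :
    U.rows = V.rows ∧ W.rows = U.rows ∧ W.cols = U.cols + V.cols := by
  unfold colCat at h
  split_ifs at h with hUV
  cases h
  exact ⟨hUV, rfl, rfl⟩

lemma dims_of_rowCat_eq_some {U V W : Arr σ} (h : rowCat U V = some W) :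
    U.cols = V.cols ∧ W.cols = U.cols ∧ W.rows = U.rows + V.rows := by
  unfold rowCat at h
  split_ifs at h with hUV
  cases h
  exact ⟨hUV, rfl, rfl⟩

end Arr

namespace Gamma5

open Arr

variable {σ : Type}

lemma subCR_eq (s : ℕ → Arr σ) :
    subCR s gamma5 =
      (colCat (s 0) (s 1)).bind fun x => (colCat (s 1) (s 0)).bind fun y => rowCat x y := rfl

lemma subRC_eq (s : ℕ → Arr σ) :
    subRC s gamma5 =
      (rowCat (s 0) (s 1)).bind fun x => (rowCat (s 1) (s 0)).bind fun y => colCat x y := rfl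

lemma rows_eq_of_subCR_eq_some {s : ℕ → Arr σ} {W : Arr σ} (h : subCR s gamma5 = some W) :
    W.rows = 2 * (s 0).rows := by
  obtain ⟨x, hx, y, hy, hxy⟩ : ∃ x, colCat (s 0) (s 1) = some x ∧
      ∃ y, colCat (s 1) (s 0) = some y ∧ rowCat x y = some W := by
    simpa only [subCR_eq, Option.bind_eq_some_iff] using h
  have := dims_of_colCat_eq_some hx
  have := dims_of_colCat_eq_some hy
  have := dims_of_rowCat_eq_some hxy
  omega

lemma cols_eq_of_subRC_eq_some {s : ℕ → Arr σ} {W : Arr σ} (h : subRC s gamma5 = some W) :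
    W.cols = 2 * (s 0).cols := by
  obtain ⟨x, hx, y, hy, hxy⟩ : ∃ x, rowCat (s 0) (s 1) = some x ∧
      ∃ y, rowCat (s 1) (s 0) = some y ∧ colCat x y = some W := by
    simpa only [subRC_eq, Option.bind_eq_some_iff] using h
  have := dims_of_rowCat_eq_some hx
  have := dims_of_rowCat_eq_some hy
  have := dims_of_colCat_eq_some hxy
  omega

lemma subCR_const (a : σ) :
    subCR (fun x => if x = 0 then const a 1 1 one_pos one_pos else const a 1 2 one_pos two_pos)
      gamma5 = some (const a 2 3 two_pos three_pos) := by
  simp only [subCR_eq, one_ne_zero, if_true, if_false, colCat_const, Option.bind_some]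
  exact rowCat_const a 1 1 3 one_pos one_pos three_pos

lemma subRC_const (a : σ) :
    subRC (fun x => if x = 0 then const a 1 1 one_pos one_pos else const a 2 1 two_pos one_pos)
      gamma5 = some (const a 3 2 three_pos two_pos) := by
  simp only [subRC_eq, one_ne_zero, if_true, if_false, rowCat_const, Option.bind_some]
  exact colCat_const a 3 1 1 three_pos one_pos one_pos

lemma subRC_ne_const_two_three (a : σ) (s : ℕ → Arr σ) :
    subRC s gamma5 ≠ some (const a 2 3 two_pos three_pos) := fun h => by
  have := cols_eq_of_subRC_eq_some h
  simp only [const] at this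
  omega

lemma subCR_ne_const_three_two (a : σ) (s : ℕ → Arr σ) :
    subCR s gamma5 ≠ some (const a 3 2 three_pos two_pos) := fun h => by
  have := rows_eq_of_subCR_eq_some h
  simp only [const] at this
  omega

lemma const_two_three_mem_langOf_iff (a : σ) {z : Mode} (hz : z ≠ Mode.h) :
    const a 2 3 two_pos three_pos ∈ langOf σ z gamma5 ↔ z = Mode.r ∨ z = Mode.rc := by
  cases z
  · exact absurd rfl hz
  · simpa [langOf] using fun s _ => subRC_ne_const_two_three a s
  · simpa [langOf] using ⟨_, subCR_const a⟩
  · simpa [langOf] using subRC_ne_const_two_three a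
  · simpa [langOf] using Or.inl ⟨_, subCR_const a⟩

lemma const_three_two_mem_langOf_iff (a : σ) {z : Mode} (hz : z ≠ Mode.h) :
    const a 3 2 three_pos two_pos ∈ langOf σ z gamma5 ↔ z = Mode.c ∨ z = Mode.rc := by
  cases z
  · exact absurd rfl hz
  · simpa [langOf] using fun s h _ => subCR_ne_const_three_two a s h
  · simpa [langOf] using subCR_ne_const_three_two a
  · simpa [langOf] using ⟨_, subRC_const a⟩
  · simpa [langOf] using Or.inr ⟨_, subRC_const a⟩

end Gamma5

open Arr Gamma5 in
theorem stmt5_general {σ : Type} [Nonempty σ] (z z' : Mode)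
    (hz : z ≠ Mode.h) (hz' : z' ≠ Mode.h) (hne : z ≠ z') :
    langOf σ z gamma5 ≠ langOf σ z' gamma5 := by
  obtain ⟨a⟩ := ‹Nonempty σ›
  intro hlang
  have hr := const_two_three_mem_langOf_iff a hz
  have hc := const_three_two_mem_langOf_iff a hz
  rw [hlang, const_two_three_mem_langOf_iff a hz'] at hr
  rw [hlang, const_three_two_mem_langOf_iff a hz'] at hc
  cases z <;> cases z' <;> simp_all

/-- for distinct modes `z, z' ∈ {p, r, c, rc}`, the `z` and `z'`
pattern languages of `γ = [x₁ x₂; x₂ x₁]` differ. -/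
theorem stmt5 {σ : Type} [Fintype σ] [Nonempty σ] (z z' : Mode)
    (hz : z ≠ Mode.h) (hz' : z' ≠ Mode.h) (hne : z ≠ z') :
    langOf σ z gamma5 ≠ langOf σ z' gamma5 :=
  stmt5_general z z' hz hz' hne
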